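/- arXiv:0911.5384 — 2 statements merged into one kernel-verified Lean document; each statement's English description precedes it below -/
import Mathlib

section
/- (Correctness of Rule 2, contradicting case.) Let S be a weighted system containing two equations with the same left-hand side α ⊆ {1,…,n} and contradicting right-hand sides: Σ_{i∈α} z_i = b with weight w' and Σ_{i∈α} z_i = b+1 with weight w'', where w' ≥ w''. Let T be obtained from S by replacing this pair by the single equation Σ_{i∈α} z_i = b with weight w' − w'' (deleting it if w' = w''), and let W_T = W − 2w''. Then for every assignment z, sat_S(z) = sat_T(z) + w''; consequently, for every integer k, there exists z with 2·sat_S(z) ≥ W + k if and only if there exists z with 2·sat_T(z) ≥ W_T + k. -/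
/-! Every assignment satisfies exactly one of the two contradicting equations, so the pair
contributes `w''` more to `sat_S` than its replacement contributes to `sat_T`; as the total
weight drops by `2 w''`, the excess `2 · sat - W` is the same for both systems. -/

theorem ite_eq_ite_tsub_add {p : Prop} [Decidable p] {a c : ℕ} (hca : c ≤ a) :
    (if p then a else c) = (if p then a - c else 0) + c := by
  split <;> omega

theorem exists_le_two_mul_iff_of_eq_add {ι : Type*} {f g : ι → ℕ} {c A B : ℕ}
    (hfg : ∀ z, f z = g z + c) (hAB : A = B + 2 * c) (k : ℤ) :
    (∃ z, (A : ℤ) + k ≤ 2 * f z) ↔ ∃ z, (B : ℤ) + k ≤ 2 * g z :=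
  exists_congr fun z => by rw [hfg, hAB]; push_cast; constructor <;> intro <;> linarith

theorem maxlin2_rule2_contradicting_correct_general
    (n m : ℕ) (α : Fin m → Finset (Fin n))
    (b : Fin m → ZMod 2) (w : Fin m → ℕ)
    (α₀ : Finset (Fin n)) (b₀ : ZMod 2)
    (w' w'' : ℕ) (hww : w'' ≤ w')
    (satS satT : (Fin n → ZMod 2) → ℕ)
    (hsatS : ∀ z, satS z =
      (∑ j ∈ Finset.univ.filter (fun j => ∑ i ∈ α j, z i = b j), w j) +
        (if ∑ i ∈ α₀, z i = b₀ then w' else w''))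
    (hsatT : ∀ z, satT z =
      (∑ j ∈ Finset.univ.filter (fun j => ∑ i ∈ α j, z i = b j), w j) +
        (if ∑ i ∈ α₀, z i = b₀ then w' - w'' else 0))
    (WS WT : ℕ)
    (hWS : WS = (∑ j, w j) + w' + w'')
    (hWT : WT = (∑ j, w j) + (w' - w'')) :
    (∀ z, satS z = satT z + w'') ∧
      ∀ k : ℤ, (∃ z, (WS : ℤ) + k ≤ 2 * satS z) ↔
        (∃ z, (WT : ℤ) + k ≤ 2 * satT z) := by
  have hsat : ∀ z, satS z = satT z + w'' := fun z => by
    rw [hsatS, hsatT, ite_eq_ite_tsub_add hww, add_assoc]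
  have hW : WS = WT + 2 * w'' := by omega
  exact ⟨hsat, exists_le_two_mul_iff_of_eq_add hsat hW⟩

/-- Correctness of Rule 2, contradicting case: the system `S`
consists of the common equations `(α j, b j, w j)` together with the pair
`∑ i ∈ α₀, z i = b₀` of weight `w'` and `∑ i ∈ α₀, z i = b₀ + 1` of weight `w''`,
with `w' ≥ w''`; the system `T` replaces the pair by the single equation
`∑ i ∈ α₀, z i = b₀` of weight `w' - w''` (deleted when `w' = w''`).  Then
`sat_S(z) = sat_T(z) + w''` for every `z`, and for every integer `k` there is
`z` with `2·sat_S(z) ≥ W_S + k` iff there is `z` with `2·sat_T(z) ≥ W_T + k`,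
where `W_T = W_S - 2 w''`. -/
theorem maxlin2_rule2_contradicting_correct
    (n m : ℕ) (α : Fin m → Finset (Fin n)) (hα : ∀ j, (α j).Nonempty)
    (b : Fin m → ZMod 2) (w : Fin m → ℕ) (hw : ∀ j, 0 < w j)
    (α₀ : Finset (Fin n)) (hα₀ : α₀.Nonempty) (b₀ : ZMod 2)
    (w' w'' : ℕ) (hw'' : 0 < w'') (hww : w'' ≤ w')
    (satS satT : (Fin n → ZMod 2) → ℕ)
    (hsatS : ∀ z, satS z =
      (∑ j ∈ Finset.univ.filter (fun j => ∑ i ∈ α j, z i = b j), w j) +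
        (if ∑ i ∈ α₀, z i = b₀ then w' else w''))
    (hsatT : ∀ z, satT z =
      (∑ j ∈ Finset.univ.filter (fun j => ∑ i ∈ α j, z i = b j), w j) +
        (if ∑ i ∈ α₀, z i = b₀ then w' - w'' else 0))
    (WS WT : ℕ)
    (hWS : WS = (∑ j, w j) + w' + w'')
    (hWT : WT = (∑ j, w j) + (w' - w'')) :
    (∀ z, satS z = satT z + w'') ∧
      ∀ k : ℤ, (∃ z, (WS : ℤ) + k ≤ 2 * satS z) ↔
        (∃ z, (WT : ℤ) + k ≤ 2 * satT z) :=
  maxlin2_rule2_contradicting_correct_general n m α b w α₀ b₀ w' w'' hww satS satT hsatS hsatT WS WT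
    hWS hWT
end

section
/- (Lemma 3, the paper's main technical lemma.) Let S be a weighted system of m linear equations over F_2 in n variables such that: the left-hand side supports α_1,…,α_m are pairwise distinct nonempty subsets of {1,…,n}, each |α_j| ≤ r, and every variable i ∈ {1,…,n} occurs in at least one α_j. Let k be a nonnegative integer. If n ≥ 2^k · r, then there exists an assignment z : {1,…,n} → F_2 with 2·sat(z) ≥ W + k. -/
namespace ML2

lemma two_mul_le_two_pow (k : ℕ) : 2 * k ≤ 2 ^ k := by
  induction k with
  | zero => simp
  | succ k ih =>
    rcases Nat.eq_zero_or_pos k with h | h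
    · subst h; simp
    · have h2 : 2 ≤ 2 ^ k := by
        calc (2:ℕ) = 2^1 := rfl
        _ ≤ 2^k := Nat.pow_le_pow_right (by norm_num) h
      rw [pow_succ]
      omega

lemma zmod2_cases : ∀ x : ZMod 2, x = 0 ∨ x = 1 := by decide

lemma zmod2_add_self (x : ZMod 2) : x + x = 0 := by revert x; decide

lemma zmod2_eq_of_add_eq_zero : ∀ x y : ZMod 2, x + y = 0 → y = x := by decide

variable {n : ℕ}

abbrev G (n : ℕ) := Fin n → ZMod 2

def supp (a : G n) : Finset (Fin n) := Finset.univ.filter (fun v => a v ≠ 0)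

lemma mem_supp {a : G n} {v : Fin n} : v ∈ supp a ↔ a v ≠ 0 := by simp [supp]

def wt (a : G n) : ℕ := (supp a).card

lemma wt_pos {a : G n} (ha : a ≠ 0) : 1 ≤ wt a := by
  rcases Function.ne_iff.mp ha with ⟨v, hv⟩
  have hv' : v ∈ supp a := mem_supp.mpr (by simpa using hv)
  have := Finset.card_pos.mpr ⟨v, hv'⟩
  unfold wt
  omega

def cover (M : Finset (G n)) : Finset (Fin n) := M.biUnion supp

def projF (a : G n) : G n →+ G n where
  toFun x := fun v => if a v ≠ 0 then 0 else x v
  map_zero' := by funext v; by_cases h : a v ≠ 0 <;> simp [h]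
  map_add' := by
    intro x y; funext v
    simp only [Pi.add_apply]
    split_ifs <;> simp

lemma projF_apply (a x : G n) (v : Fin n) :
    projF a x v = if a v ≠ 0 then 0 else x v := rfl

lemma supp_projF (a x : G n) : supp (projF a x) = supp x \ supp a := by
  ext v
  simp only [mem_supp, Finset.mem_sdiff, projF_apply]
  by_cases h : a v ≠ 0 <;> simp [h, mem_supp]

lemma wt_projF_le (a x : G n) : wt (projF a x) ≤ wt x := by
  unfold wt; rw [supp_projF]
  exact Finset.card_le_card (Finset.sdiff_subset)

lemma projF_self (a : G n) : projF a a = 0 := by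
  funext v
  rw [projF_apply]
  by_cases h : a v ≠ 0 <;> simp [h]
  · exact not_not.mp h

lemma supp_add_inter (a c : G n) :
    supp (c + a) = (supp c \ supp a) ∪ (supp a \ supp c) := by
  ext v
  have key : ∀ p q : ZMod 2, (p + q ≠ 0 ↔ (p ≠ 0 ∧ q = 0) ∨ (q ≠ 0 ∧ p = 0)) := by decide
  simp only [mem_supp, Finset.mem_union, Finset.mem_sdiff, Pi.add_apply, mem_supp]
  rw [key]
  tauto

lemma key_wt (a c : G n) : wt c + wt (c + a) = 2 * wt (projF a c) + wt a := by
  have h1 : (supp c ∩ supp a).card + (supp c \ supp a).card = wt c :=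
    Finset.card_inter_add_card_sdiff _ _
  have h2 : (supp a ∩ supp c).card + (supp a \ supp c).card = wt a :=
    Finset.card_inter_add_card_sdiff _ _
  have h3 : wt (c + a) = (supp c \ supp a).card + (supp a \ supp c).card := by
    unfold wt
    rw [supp_add_inter, Finset.card_union_of_disjoint]
    exact disjoint_sdiff_sdiff
  have h4 : wt (projF a c) = (supp c \ supp a).card := by
    unfold wt; rw [supp_projF]
  have h5 : (supp a ∩ supp c).card = (supp c ∩ supp a).card := by
    rw [Finset.inter_comm]
  omega



def SumFree (M L : Finset (G n)) : Prop :=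
  L ⊆ M ∧ ∀ I ⊆ L, 2 ≤ I.card → (∑ x ∈ I, x) ∉ M ∧ (∑ x ∈ I, x) ≠ 0

lemma sumfree_empty (M : Finset (G n)) : SumFree M ∅ :=
  ⟨Finset.empty_subset _, by
    intro I hI hc
    have := Finset.subset_empty.mp hI
    subst this
    simp at hc⟩

lemma notMem_of_proj {N : Finset (G n)} {a s : G n}
    (h1 : projF a s ∉ (N.image (projF a)).erase 0) (h2 : projF a s ≠ 0) :
    s ∉ N ∧ s ≠ 0 := by
  constructor
  · intro hs
    exact h1 (Finset.mem_erase.mpr ⟨h2, Finset.mem_image_of_mem _ hs⟩)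
  · intro h0
    apply h2
    rw [h0, map_zero]

lemma sumfree_lift (N : Finset (G n)) (a : G n) (L' : Finset (G n))
    (hSF : SumFree ((N.image (projF a)).erase 0) L')
    (lift : G n → G n)
    (hlift : ∀ y ∈ L', lift y ∈ N ∧ projF a (lift y) = y) :
    SumFree N (L'.image lift) ∧ (L'.image lift).card = L'.card := by
  obtain ⟨hsub', hsum'⟩ := hSF
  have hinj : ∀ y ∈ L', ∀ y' ∈ L', lift y = lift y' → y = y' := by
    intro y hy y' hy' h
    rw [← (hlift y hy).2, ← (hlift y' hy').2, h]
  refine ⟨⟨?_, ?_⟩, ?_⟩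
  · intro x hx
    obtain ⟨y, hy, rfl⟩ := Finset.mem_image.mp hx
    exact (hlift y hy).1
  · intro I hI hcard
    obtain ⟨It, hItsub, rfl⟩ := Finset.subset_image_iff.mp hI
    have hinj' : ∀ y ∈ It, ∀ y' ∈ It, lift y = lift y' → y = y' := fun y hy y' hy' =>
      hinj y (hItsub hy) y' (hItsub hy')
    rw [Finset.sum_image hinj']
    have hcard' : 2 ≤ It.card := by
      rwa [Finset.card_image_of_injOn (fun y hy y' hy' => hinj' y hy y' hy')] at hcard
    have hproj : projF a (∑ y ∈ It, lift y) = ∑ y ∈ It, y := by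
      rw [map_sum]
      exact Finset.sum_congr rfl (fun y hy => (hlift y (hItsub hy)).2)
    obtain ⟨hnm, hnz⟩ := hsum' It hItsub hcard'
    have h2 : projF a (∑ y ∈ It, lift y) ≠ 0 := by rw [hproj]; exact hnz
    have h1 : projF a (∑ y ∈ It, lift y) ∉ (N.image (projF a)).erase 0 := by
      rw [hproj]; exact hnm
    exact notMem_of_proj h1 h2
  · exact Finset.card_image_of_injOn (fun y hy y' hy' => hinj y hy y' hy')

lemma inner (w k : ℕ) (hw : 1 ≤ w)
    (HA : ∀ u, u < w → 1 ≤ u → ∀ M : Finset (G n), (0:G n) ∉ M → (∀ x ∈ M, wt x ≤ u) →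
      2*k*u ≤ (cover M).card → ∃ L, SumFree M L ∧ L.card = k) :
    ∀ j (N : Finset (G n)), (0:G n) ∉ N → (∀ x ∈ N, wt x ≤ w) →
    (j + k) * w ≤ (cover N).card →
    (∃ L, SumFree N L ∧ L.card = j ∧ ∀ x ∈ L, w < 2 * wt x) ∨
    (∃ L, SumFree N L ∧ L.card = k) := by
  intro j
  induction j with
  | zero =>
    intro N h0 hwt hcov
    left
    exact ⟨∅, sumfree_empty N, by simp, by simp⟩
  | succ j IH =>
    intro N h0 hwt hcov
    have hNne : N.Nonempty := by
      by_contra h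
      rw [Finset.not_nonempty_iff_eq_empty] at h
      subst h
      simp [cover] at hcov
      have h1 : 1 * 1 ≤ (j + 1 + k) * w := Nat.mul_le_mul (by omega) hw
      omega
    obtain ⟨a, haN, hamax⟩ := Finset.exists_max_image N wt hNne
    have hu1 : 1 ≤ wt a := wt_pos (fun h => h0 (h ▸ haN))
    by_cases hcase : 2 * wt a ≤ w
    · -- restart with smaller max weight
      right
      have huw : wt a < w := by omega
      apply HA (wt a) huw hu1 N h0 (fun b hb => hamax b hb)
      have e1 : 2*k*(wt a) ≤ k*w := by
        calc 2*k*(wt a) = k*(2*(wt a)) := by ring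
        _ ≤ k*w := Nat.mul_le_mul_left k hcase
      have e2 : k*w ≤ (j+1+k)*w := Nat.mul_le_mul_right w (by omega)
      omega
    · push_neg at hcase
      set N' := (N.image (projF a)).erase 0 with hN'def
      have h0' : (0:G n) ∉ N' := Finset.notMem_erase _ _
      have hwt' : ∀ x ∈ N', wt x ≤ w := by
        intro x hx
        obtain ⟨c, hc, rfl⟩ := Finset.mem_image.mp (Finset.mem_of_mem_erase hx)
        exact le_trans (wt_projF_le a c) (hwt c hc)
      have hcovsub : cover N ⊆ cover N' ∪ supp a := by
        intro v hv
        obtain ⟨c, hc, hvc⟩ := Finset.mem_biUnion.mp hv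
        by_cases hva : v ∈ supp a
        · exact Finset.mem_union_right _ hva
        · apply Finset.mem_union_left
          have hvpc : v ∈ supp (projF a c) := by
            rw [supp_projF]; exact Finset.mem_sdiff.mpr ⟨hvc, hva⟩
          have hpc0 : projF a c ≠ 0 := by
            intro h
            rw [h] at hvpc
            simp [supp, mem_supp] at hvpc
          exact Finset.mem_biUnion.mpr ⟨projF a c,
            Finset.mem_erase.mpr ⟨hpc0, Finset.mem_image_of_mem _ hc⟩, hvpc⟩
      have hcov' : (j + k) * w ≤ (cover N').card := by
        have h1 : (cover N).card ≤ (cover N').card + wt a := by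
          calc (cover N).card ≤ (cover N' ∪ supp a).card := Finset.card_le_card hcovsub
          _ ≤ (cover N').card + (supp a).card := Finset.card_union_le _ _
        have h2 : wt a ≤ w := hwt a haN
        have h3 : (j+k)*w + w = (j+1+k)*w := by ring
        omega
      rcases IH N' h0' hwt' hcov' with ⟨L', hSF', hcard', hheavy'⟩ | ⟨L', hSF', hcard'⟩
      · -- good lifts and insert a
        have hglex : ∀ y, ∃ c, y ∈ L' → (c ∈ N ∧ projF a c = y ∧ c + a ∉ N) := by
          intro y
          by_cases hy : y ∈ L'
          · obtain ⟨c0, hc0N, hpc0⟩ := Finset.mem_image.mp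
              (Finset.mem_of_mem_erase (hSF'.1 hy))
            by_cases hgood : c0 + a ∉ N
            · exact ⟨c0, fun _ => ⟨hc0N, hpc0, hgood⟩⟩
            · push_neg at hgood
              exfalso
              have hkey := key_wt a c0
              have h1 : wt c0 ≤ wt a := hamax c0 hc0N
              have h2 : wt (c0 + a) ≤ wt a := hamax _ hgood
              have h3 : w < 2 * wt y := hheavy' y hy
              have h4 : wt a ≤ w := hwt a haN
              rw [hpc0] at hkey
              omega
          · exact ⟨0, fun h => absurd h hy⟩
        choose glift hglift using hglex
        have hGmem : ∀ y ∈ L', glift y ∈ N := fun y hy => (hglift y hy).1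
        have hGproj : ∀ y ∈ L', projF a (glift y) = y := fun y hy => (hglift y hy).2.1
        have hGgood : ∀ y ∈ L', glift y + a ∉ N := fun y hy => (hglift y hy).2.2
        have hynz : ∀ y ∈ L', y ≠ (0:G n) := by
          intro y hy h
          exact h0' (h ▸ hSF'.1 hy)
        have hinj : ∀ y ∈ L', ∀ y' ∈ L', glift y = glift y' → y = y' := by
          intro y hy y' hy' h
          rw [← hGproj y hy, ← hGproj y' hy', h]
        have hanotmem : a ∉ L'.image glift := by
          intro h
          obtain ⟨y, hy, hgy⟩ := Finset.mem_image.mp h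
          apply hynz y hy
          rw [← hGproj y hy, hgy, projF_self]
        left
        refine ⟨insert a (L'.image glift), ⟨?_, ?_⟩, ?_, ?_⟩
        · -- subset
          intro x hx
          rcases Finset.mem_insert.mp hx with rfl | hx
          · exact haN
          · obtain ⟨y, hy, rfl⟩ := Finset.mem_image.mp hx
            exact hGmem y hy
        · -- sums
          intro I hI hcard2
          have hI'sub : I.erase a ⊆ L'.image glift := by
            intro x hx
            have hxa := Finset.ne_of_mem_erase hx
            rcases Finset.mem_insert.mp (hI (Finset.mem_of_mem_erase hx)) with h | h
            · exact absurd h hxa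
            · exact h
          obtain ⟨It, hItsub, hItimg⟩ := Finset.subset_image_iff.mp hI'sub
          have hinj' : ∀ y ∈ It, ∀ y' ∈ It, glift y = glift y' → y = y' := fun y hy y' hy' =>
            hinj y (hItsub hy) y' (hItsub hy')
          have hcardIt : It.card = (I.erase a).card := by
            rw [← hItimg]
            exact (Finset.card_image_of_injOn (fun y hy y' hy' => hinj' y hy y' hy')).symm
          have hsumerase : ∑ x ∈ I.erase a, x = ∑ y ∈ It, glift y := by
            rw [← hItimg, Finset.sum_image hinj']
          by_cases haI : a ∈ I
          · have hsplit : ∑ x ∈ I, x = a + ∑ y ∈ It, glift y := by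
              rw [← Finset.add_sum_erase I _ haI, hsumerase]
            have hcardE : (I.erase a).card = I.card - 1 := Finset.card_erase_of_mem haI
            rcases Nat.lt_or_ge It.card 2 with hsmall | hbig
            · -- card It = 1
              have h1 : It.card = 1 := by omega
              obtain ⟨y, hyeq⟩ := Finset.card_eq_one.mp h1
              subst hyeq
              have hyL : y ∈ L' := hItsub (Finset.mem_singleton_self y)
              rw [hsplit, Finset.sum_singleton]
              constructor
              · intro hmem
                apply hGgood y hyL
                rwa [add_comm] at hmem
              · intro h0sum
                have : glift y = a := by
                  funext v
                  have := congrFun h0sum v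
                  simp only [Pi.add_apply, Pi.zero_apply] at this
                  exact zmod2_eq_of_add_eq_zero _ _ this
                apply hynz y hyL
                rw [← hGproj y hyL, this, projF_self]
            · -- card It ≥ 2
              obtain ⟨hnm, hnz⟩ := hSF'.2 It hItsub hbig
              have hproj : projF a (∑ x ∈ I, x) = ∑ y ∈ It, y := by
                rw [hsplit, map_add, projF_self, zero_add, map_sum]
                exact Finset.sum_congr rfl (fun y hy => hGproj y (hItsub hy))
              have h2 : projF a (∑ x ∈ I, x) ≠ 0 := by rw [hproj]; exact hnz
              have h1 : projF a (∑ x ∈ I, x) ∉ N' := by rw [hproj]; exact hnm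
              exact notMem_of_proj h1 h2
          · have hIeq : I.erase a = I := Finset.erase_eq_of_notMem haI
            have hbig : 2 ≤ It.card := by rw [hcardIt, hIeq]; exact hcard2
            obtain ⟨hnm, hnz⟩ := hSF'.2 It hItsub hbig
            have hproj : projF a (∑ x ∈ I, x) = ∑ y ∈ It, y := by
              rw [← hIeq, hsumerase, map_sum]
              exact Finset.sum_congr rfl (fun y hy => hGproj y (hItsub hy))
            have h2 : projF a (∑ x ∈ I, x) ≠ 0 := by rw [hproj]; exact hnz
            have h1 : projF a (∑ x ∈ I, x) ∉ N' := by rw [hproj]; exact hnm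
            exact notMem_of_proj h1 h2
        · -- card
          rw [Finset.card_insert_of_notMem hanotmem,
            Finset.card_image_of_injOn (fun y hy y' hy' => hinj y hy y' hy'), hcard']
        · -- heavy
          intro x hx
          rcases Finset.mem_insert.mp hx with rfl | hx
          · exact hcase
          · obtain ⟨y, hy, hxy⟩ := Finset.mem_image.mp hx
            have h1 : wt y ≤ wt (glift y) := by
              have h2 := wt_projF_le a (glift y)
              rwa [hGproj y hy] at h2
            have h3 := hheavy' y hy
            rw [← hxy]
            omega
      · -- right: arbitrary lift of a full k-set
        right
        have hlex : ∀ y, ∃ c, y ∈ L' → (c ∈ N ∧ projF a c = y) := by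
          intro y
          by_cases hy : y ∈ L'
          · obtain ⟨c0, hc0N, hpc0⟩ := Finset.mem_image.mp
              (Finset.mem_of_mem_erase (hSF'.1 hy))
            exact ⟨c0, fun _ => ⟨hc0N, hpc0⟩⟩
          · exact ⟨0, fun h => absurd h hy⟩
        choose lift hlift using hlex
        obtain ⟨hSF2, hcard2⟩ := sumfree_lift N a L' hSF' lift (fun y hy => hlift y hy)
        exact ⟨L'.image lift, hSF2, by rw [hcard2, hcard']⟩

lemma lemA : ∀ w k (M : Finset (G n)), 1 ≤ w → (0:G n) ∉ M → (∀ x ∈ M, wt x ≤ w) →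
    2 * k * w ≤ (cover M).card → ∃ L, SumFree M L ∧ L.card = k := by
  intro w
  induction w using Nat.strong_induction_on with
  | _ w HA =>
    intro k M hw h0 hwt hcov
    have HA' : ∀ u, u < w → 1 ≤ u → ∀ M' : Finset (G n), (0:G n) ∉ M' →
        (∀ x ∈ M', wt x ≤ u) → 2*k*u ≤ (cover M').card →
        ∃ L, SumFree M' L ∧ L.card = k := by
      intro u hu h1 M' a b c
      exact HA u hu k M' h1 a b c
    have hcov2 : (k + k) * w ≤ (cover M).card := by
      have : (k+k)*w = 2*k*w := by ring
      omega
    rcases inner w k hw HA' k M h0 hwt hcov2 with ⟨L, h1, h2, _⟩ | ⟨L, h1, h2⟩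
    · exact ⟨L, h1, h2⟩
    · exact ⟨L, h1, h2⟩

lemma g2_add_self (x : G n) : x + x = 0 := by
  funext v
  simp only [Pi.add_apply, Pi.zero_apply]
  exact zmod2_add_self _

def dot (a x : G n) : ZMod 2 := ∑ v, a v * x v

lemma dot_add_left (a b x : G n) : dot (a + b) x = dot a x + dot b x := by
  unfold dot
  rw [← Finset.sum_add_distrib]
  exact Finset.sum_congr rfl (by intro v _; simp [add_mul])

lemma dot_smul_left (ε : ZMod 2) (a x : G n) : dot (ε • a) x = ε * dot a x := by
  unfold dot
  rw [Finset.mul_sum]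
  exact Finset.sum_congr rfl (by intro v _; simp [mul_assoc])

lemma dot_add_right (a x y : G n) : dot a (x + y) = dot a x + dot a y := by
  unfold dot
  rw [← Finset.sum_add_distrib]
  exact Finset.sum_congr rfl (by intro v _; simp [mul_add])

lemma dot_single (a : G n) (v : Fin n) (c : ZMod 2) : dot a (Pi.single v c) = a v * c := by
  unfold dot
  rw [Fintype.sum_eq_single v]
  · rw [Pi.single_eq_same]
  · intro v' hv'
    rw [Pi.single_eq_of_ne hv', mul_zero]

lemma elem_claim : ∀ (s : ℕ) (L : Finset (G n)), L.card = s →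
    (∀ I ⊆ L, I.Nonempty → (∑ x ∈ I, x) ≠ 0) → ∀ t : G n → ZMod 2,
    ∃ x : G n, ∀ a ∈ L, dot a x = t a := by
  intro s
  induction s with
  | zero =>
    intro L hLcard _ t
    refine ⟨0, ?_⟩
    rw [Finset.card_eq_zero] at hLcard
    subst hLcard
    intro a ha
    exact absurd ha (Finset.notMem_empty a)
  | succ s IH =>
    intro L hLcard hL t
    have hLne : L.Nonempty := by rw [← Finset.card_pos, hLcard]; omega
    obtain ⟨b, hbL⟩ := hLne
    have hb0 : b ≠ 0 := by
      intro h
      apply hL {b} (by simpa using hbL) ⟨b, Finset.mem_singleton_self b⟩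
      rw [Finset.sum_singleton, h]
    obtain ⟨v, hv⟩ := Function.ne_iff.mp hb0
    have hv' : b v ≠ 0 := by simpa using hv
    have hbv : b v = 1 := by
      rcases zmod2_cases (b v) with h | h
      · exact absurd h hv'
      · exact h
    set φ : G n → G n := fun g => g + (g v) • b with hφ
    have hinjφ : ∀ g ∈ L.erase b, ∀ g' ∈ L.erase b, φ g = φ g' → g = g' := by
      intro g hg g' hg' heq
      by_cases hgg : g v = g' v
      · have heq' : g + (g v) • b = g' + (g' v) • b := heq
        rw [← hgg] at heq'
        exact add_right_cancel heq'
      · exfalso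
        have hgb := Finset.ne_of_mem_erase hg
        have hg'b := Finset.ne_of_mem_erase hg'
        have hgg' : g ≠ g' := fun h => hgg (h ▸ rfl)
        have h1 : g + (g v) • b = g' + (g' v) • b := heq
        have hsum : g + g' = b := by
          rcases zmod2_cases (g v) with e1 | e1 <;> rcases zmod2_cases (g' v) with e2 | e2
          · exact absurd (e1.trans e2.symm) hgg
          · rw [e1, e2, zero_smul, add_zero, one_smul] at h1
            rw [h1, add_right_comm, g2_add_self, zero_add]
          · rw [e1, e2, zero_smul, add_zero, one_smul] at h1
            rw [← h1, ← add_assoc, g2_add_self, zero_add]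
          · exact absurd (e1.trans e2.symm) hgg
        have hIsub : insert g (insert g' {b}) ⊆ L := by
          intro x hx
          rcases Finset.mem_insert.mp hx with rfl | hx
          · exact Finset.mem_of_mem_erase hg
          rcases Finset.mem_insert.mp hx with rfl | hx
          · exact Finset.mem_of_mem_erase hg'
          · rw [Finset.mem_singleton.mp hx]; exact hbL
        apply hL _ hIsub ⟨g, Finset.mem_insert_self _ _⟩
        rw [Finset.sum_insert (by
            simp only [Finset.mem_insert, Finset.mem_singleton]
            push_neg
            exact ⟨hgg', hgb⟩),
          Finset.sum_insert (by simpa using hg'b), Finset.sum_singleton,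
          ← add_assoc, hsum, g2_add_self]
    set L2 : Finset (G n) := (L.erase b).image φ with hL2def
    have hcardL2 : L2.card = s := by
      rw [hL2def, Finset.card_image_of_injOn (fun g hg g' hg' => hinjφ g hg g' hg'),
        Finset.card_erase_of_mem hbL, hLcard]
      omega
    have hL2 : ∀ I ⊆ L2, I.Nonempty → (∑ x ∈ I, x) ≠ 0 := by
      intro I hI hIne
      obtain ⟨It, hItsub, rfl⟩ := Finset.subset_image_iff.mp hI
      have hItne : It.Nonempty := by
        rcases hIne with ⟨x, hx⟩
        obtain ⟨y, hy, _⟩ := Finset.mem_image.mp hx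
        exact ⟨y, hy⟩
      have hinj' : ∀ g ∈ It, ∀ g' ∈ It, φ g = φ g' → g = g' := fun g hg g' hg' =>
        hinjφ g (hItsub hg) g' (hItsub hg')
      rw [Finset.sum_image hinj']
      have hsplit : ∑ g ∈ It, φ g = (∑ g ∈ It, g) + (∑ g ∈ It, g v) • b := by
        rw [Finset.sum_smul]
        rw [← Finset.sum_add_distrib]
      rw [hsplit]
      rcases zmod2_cases (∑ g ∈ It, g v) with e | e
      · rw [e, zero_smul, add_zero]
        exact hL It (hItsub.trans (Finset.erase_subset _ _)) hItne
      · rw [e, one_smul]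
        have hbnot : b ∉ It := fun h => (Finset.ne_of_mem_erase (hItsub h)) rfl
        have : (∑ g ∈ It, g) + b = ∑ g ∈ insert b It, g := by
          rw [Finset.sum_insert hbnot, add_comm]
        rw [this]
        apply hL (insert b It)
        · intro x hx
          rcases Finset.mem_insert.mp hx with rfl | hx
          · exact hbL
          · exact Finset.mem_of_mem_erase (hItsub hx)
        · exact ⟨b, Finset.mem_insert_self _ _⟩
    set t2 : G n → ZMod 2 :=
      fun g => ∑ aa ∈ (L.erase b).filter (fun aa => φ aa = g), (t aa + (aa v) * t b) with ht2def
    obtain ⟨x₂, hx₂⟩ := IH L2 hcardL2 hL2 t2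
    have ht2eq : ∀ aa ∈ L.erase b, t2 (φ aa) = t aa + (aa v) * t b := by
      intro aa ha
      have hfeq : (L.erase b).filter (fun a' => φ a' = φ aa) = {aa} := by
        ext a'
        simp only [Finset.mem_filter, Finset.mem_singleton]
        constructor
        · rintro ⟨ha', heq⟩
          exact hinjφ a' ha' aa ha heq
        · rintro rfl
          exact ⟨ha, rfl⟩
      rw [ht2def]
      simp only
      rw [hfeq, Finset.sum_singleton]
    refine ⟨x₂ + Pi.single v (t b + dot b x₂), ?_⟩
    intro aa haa
    by_cases hab : aa = b
    · subst hab
      rw [dot_add_right, dot_single, hbv, one_mul]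
      have : ∀ p q : ZMod 2, p + (q + p) = q := by decide
      exact this _ _
    · have haa' : aa ∈ L.erase b := Finset.mem_erase.mpr ⟨hab, haa⟩
      have h1 := hx₂ (φ aa) (Finset.mem_image_of_mem _ haa')
      rw [ht2eq aa haa'] at h1
      have h2 : dot (φ aa) x₂ = dot aa x₂ + (aa v) * dot b x₂ := by
        rw [hφ]
        simp only
        rw [dot_add_left, dot_smul_left]
      rw [h2] at h1
      rw [dot_add_right, dot_single]
      have key : ∀ A B ta tb ε : ZMod 2, A + ε*B = ta + ε*tb → A + ε*(tb + B) = ta := by decide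
      exact key _ _ _ _ _ h1

end ML2

/-- Lemma 3: if the supports `α j` are pairwise distinct nonempty
subsets of `{1,…,n}` of size at most `r`, every variable occurs in some
equation, and `n ≥ 2^k · r`, then there is an assignment `z` with
`2·sat(z) ≥ W + k`.  (The hypothesis `1 ≤ r` is forced whenever the system is
nonempty, since equations are nonempty and have at most `r` variables.) -/
theorem maxlin2_lemma3
    (n m r : ℕ) (hr : 1 ≤ r)
    (α : Fin m → Finset (Fin n)) (b : Fin m → ZMod 2)
    (w : Fin m → ℕ) (hw : ∀ j, 0 < w j)
    (hne : ∀ j, (α j).Nonempty) (hcard : ∀ j, (α j).card ≤ r)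
    (hdist : Function.Injective α)
    (hcover : ∀ i : Fin n, ∃ j, i ∈ α j)
    (k : ℕ) (hn : 2 ^ k * r ≤ n) :
    ∃ z : Fin n → ZMod 2,
      (∑ j, w j) + k ≤
        2 * ∑ j ∈ Finset.univ.filter (fun j => ∑ i ∈ α j, z i = b j), w j := by
  classical
  set vec : Fin m → ML2.G n := fun j => fun i => if i ∈ α j then 1 else 0 with hvecdef
  have hvecapply : ∀ j i, vec j i = if i ∈ α j then 1 else 0 := fun j i => rfl
  have hsuppvec : ∀ j, ML2.supp (vec j) = α j := by
    intro j
    ext i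
    rw [ML2.mem_supp, hvecapply]
    by_cases h : i ∈ α j <;> simp [h]
  have hvecinj : Function.Injective vec := by
    intro j j' h
    apply hdist
    have h2 := congrArg ML2.supp h
    rwa [hsuppvec, hsuppvec] at h2
  have hwtvec : ∀ j, ML2.wt (vec j) = (α j).card := by
    intro j
    unfold ML2.wt
    rw [hsuppvec]
  have hvec0 : ∀ j, vec j ≠ 0 := by
    intro j h
    obtain ⟨i, hi⟩ := hne j
    have h2 : vec j i = 0 := by rw [h]; rfl
    rw [hvecapply, if_pos hi] at h2
    exact one_ne_zero h2
  set M : Finset (ML2.G n) := Finset.image vec Finset.univ with hMdef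
  have h0M : (0 : ML2.G n) ∉ M := by
    intro h
    obtain ⟨j, _, hj⟩ := Finset.mem_image.mp h
    exact hvec0 j hj
  have hwtM : ∀ x ∈ M, ML2.wt x ≤ r := by
    intro x hx
    obtain ⟨j, _, rfl⟩ := Finset.mem_image.mp hx
    rw [hwtvec]
    exact hcard j
  have hcovM : ML2.cover M = Finset.univ := by
    ext i
    simp only [Finset.mem_univ, iff_true]
    obtain ⟨j, hj⟩ := hcover i
    exact Finset.mem_biUnion.mpr ⟨vec j, Finset.mem_image_of_mem _ (Finset.mem_univ j),
      by rw [hsuppvec]; exact hj⟩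
  have hcovcard : 2*k*r ≤ (ML2.cover M).card := by
    rw [hcovM, Finset.card_univ, Fintype.card_fin]
    calc 2*k*r ≤ 2^k*r := Nat.mul_le_mul_right r (ML2.two_mul_le_two_pow k)
    _ ≤ n := hn
  obtain ⟨L, hSF, hcardL⟩ := ML2.lemA r k M hr h0M hwtM hcovcard
  set J : Finset (Fin m) := Finset.univ.filter (fun j => vec j ∈ L) with hJdef
  have hmemJ : ∀ j, j ∈ J ↔ vec j ∈ L := by
    intro j
    rw [hJdef, Finset.mem_filter]
    simp
  have hLJ : L = J.image vec := by
    ext g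
    constructor
    · intro hg
      obtain ⟨j, _, rfl⟩ := Finset.mem_image.mp (hSF.1 hg)
      exact Finset.mem_image_of_mem _ ((hmemJ j).mpr hg)
    · intro hg
      obtain ⟨j, hj, rfl⟩ := Finset.mem_image.mp hg
      exact (hmemJ j).mp hj
  have hJcard : J.card = k := by
    rw [← hcardL, hLJ, Finset.card_image_of_injOn (fun x _ y _ h => hvecinj h)]
  have hLsum : ∀ I ⊆ L, I.Nonempty → (∑ x ∈ I, x) ≠ 0 := by
    intro I hI hIne
    rcases Nat.lt_or_ge I.card 2 with h | h
    · have h1 : I.card = 1 := by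
        have := Finset.card_pos.mpr hIne
        omega
      obtain ⟨g, rfl⟩ := Finset.card_eq_one.mp h1
      rw [Finset.sum_singleton]
      intro h0
      exact h0M (h0 ▸ hSF.1 (hI (Finset.mem_singleton_self g)))
    · exact (hSF.2 I hI h).2
  set F : Finset (ML2.G n) :=
    Finset.univ.filter (fun x => ∀ j ∈ J, ML2.dot (vec j) x = b j) with hFdef
  have hmemF : ∀ x, x ∈ F ↔ ∀ j ∈ J, ML2.dot (vec j) x = b j := by
    intro x
    rw [hFdef, Finset.mem_filter]
    simp
  have hFne : F.Nonempty := by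
    obtain ⟨x, hx⟩ := ML2.elem_claim L.card L rfl hLsum
      (fun g => ∑ j ∈ Finset.univ.filter (fun j => vec j = g), b j)
    refine ⟨x, (hmemF x).mpr ?_⟩
    intro j hj
    rw [hx (vec j) ((hmemJ j).mp hj)]
    have hfilter : Finset.univ.filter (fun j' => vec j' = vec j) = {j} := by
      ext j'
      simp only [Finset.mem_filter, Finset.mem_univ, true_and, Finset.mem_singleton]
      exact ⟨fun h => hvecinj h, fun h => h ▸ rfl⟩
    rw [hfilter, Finset.sum_singleton]
  have hfull : ∀ j ∈ J, (F.filter (fun x => ML2.dot (vec j) x = b j)).card = F.card := by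
    intro j hj
    congr 1
    apply Finset.filter_true_of_mem
    intro x hx
    exact (hmemF x).mp hx j hj
  have hhalf : ∀ j, j ∉ J →
      2 * (F.filter (fun x => ML2.dot (vec j) x = b j)).card = F.card := by
    intro j hjJ
    have hins : ∀ I ⊆ insert (vec j) L, I.Nonempty → (∑ x ∈ I, x) ≠ 0 := by
      intro I hI hIne
      by_cases hjI : vec j ∈ I
      · have hI' : I.erase (vec j) ⊆ L := by
          intro x hx
          have hxne := Finset.ne_of_mem_erase hx
          rcases Finset.mem_insert.mp (hI (Finset.mem_of_mem_erase hx)) with h | h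
          · exact absurd h hxne
          · exact h
        intro h0
        have hvj : vec j = ∑ x ∈ I.erase (vec j), x := by
          have h1 : vec j + (vec j + ∑ x ∈ I.erase (vec j), x) = vec j + 0 := by
            rw [Finset.add_sum_erase I (fun x => x) hjI, h0]
          rw [← add_assoc, ML2.g2_add_self, zero_add, add_zero] at h1
          exact h1.symm
        rcases Nat.lt_or_ge (I.erase (vec j)).card 2 with hsm | hbg
        · rcases Nat.lt_or_ge (I.erase (vec j)).card 1 with hz | ho
          · have : I.erase (vec j) = ∅ := Finset.card_eq_zero.mp (by omega)
            rw [this, Finset.sum_empty] at hvj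
            exact hvec0 j hvj
          · have h1 : (I.erase (vec j)).card = 1 := by omega
            obtain ⟨g, hgeq⟩ := Finset.card_eq_one.mp h1
            rw [hgeq, Finset.sum_singleton] at hvj
            have hgL : g ∈ L := hI' (hgeq ▸ Finset.mem_singleton_self g)
            rw [← hvj] at hgL
            exact hjJ ((hmemJ j).mpr hgL)
        · have := (hSF.2 _ hI' hbg).1
          rw [← hvj] at this
          exact this (Finset.mem_image_of_mem _ (Finset.mem_univ j))
      · apply hLsum I ?_ hIne
        intro x hx
        rcases Finset.mem_insert.mp (hI hx) with h | h
        · exact absurd (h ▸ hx) hjI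
        · exact h
    obtain ⟨y, hy⟩ := ML2.elem_claim _ (insert (vec j) L) rfl hins
      (fun g => if g = vec j then 1 else 0)
    have hyj : ML2.dot (vec j) y = 1 := by
      have := hy (vec j) (Finset.mem_insert_self _ _)
      rwa [if_pos rfl] at this
    have hyJ : ∀ j' ∈ J, ML2.dot (vec j') y = 0 := by
      intro j' hj'
      have hj'L : vec j' ∈ L := (hmemJ j').mp hj'
      have h1 := hy (vec j') (Finset.mem_insert_of_mem hj'L)
      rw [if_neg] at h1
      · exact h1
      · intro h
        exact hjJ (hvecinj h ▸ hj')
    have hFadd : ∀ x, x ∈ F → x + y ∈ F := by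
      intro x hx
      apply (hmemF _).mpr
      intro j' hj'
      rw [ML2.dot_add_right, (hmemF x).mp hx j' hj', hyJ j' hj', add_zero]
    have hflip : ∀ p : ZMod 2, p + 1 ≠ p := by decide
    have hcardeq : (F.filter (fun x => ML2.dot (vec j) x = b j)).card =
        (F.filter (fun x => ¬ (ML2.dot (vec j) x = b j))).card := by
      apply Finset.card_bij' (fun x _ => x + y) (fun x _ => x + y)
      · intro x hx
        rw [Finset.mem_filter] at hx ⊢
        refine ⟨hFadd x hx.1, ?_⟩
        rw [ML2.dot_add_right, hx.2, hyj]
        exact hflip (b j)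
      · intro x hx
        rw [Finset.mem_filter] at hx ⊢
        refine ⟨hFadd x hx.1, ?_⟩
        rw [ML2.dot_add_right, hyj]
        rcases ML2.zmod2_cases (ML2.dot (vec j) x) with h | h <;>
          rcases ML2.zmod2_cases (b j) with h2 | h2 <;>
          rw [h, h2] <;> rw [h, h2] at hx <;> first | decide | (exact absurd rfl hx.2)
      · intro x _
        rw [add_assoc, ML2.g2_add_self, add_zero]
      · intro x _
        rw [add_assoc, ML2.g2_add_self, add_zero]
    have := Finset.card_filter_add_card_filter_not
      (s := F) (p := fun x => ML2.dot (vec j) x = b j)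
    omega
  -- final counting
  have hdotvec : ∀ j x, ML2.dot (vec j) x = ∑ i ∈ α j, x i := by
    intro j x
    unfold ML2.dot
    have h1 : ∀ v, vec j v * x v = if v ∈ α j then x v else 0 := by
      intro v
      rw [hvecapply]
      by_cases h : v ∈ α j <;> simp [h]
    rw [Finset.sum_congr rfl (fun v _ => h1 v), ← Finset.sum_filter]
    congr 1
    ext v
    simp
  set c : Fin m → ℕ := fun j => (F.filter (fun x => ML2.dot (vec j) x = b j)).card with hcdef
  set S : ML2.G n → ℕ :=
    fun x => ∑ j ∈ Finset.univ.filter (fun j => ML2.dot (vec j) x = b j), w j with hSdef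
  have hT : ∑ x ∈ F, S x = ∑ j, c j * w j := by
    calc ∑ x ∈ F, S x
        = ∑ x ∈ F, ∑ j, if ML2.dot (vec j) x = b j then w j else 0 :=
          Finset.sum_congr rfl (fun x _ => Finset.sum_filter _ _)
      _ = ∑ j, ∑ x ∈ F, if ML2.dot (vec j) x = b j then w j else 0 := Finset.sum_comm
      _ = ∑ j, c j * w j := by
          apply Finset.sum_congr rfl
          intro j _
          rw [← Finset.sum_filter, Finset.sum_const, smul_eq_mul]
  have hufJ : Finset.univ.filter (fun j => j ∈ J) = J := by
    ext j
    simp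
  have hW : (∑ j, w j) = (∑ j ∈ J, w j) + ∑ j ∈ Finset.univ.filter (fun j => j ∉ J), w j := by
    rw [← Finset.sum_filter_add_sum_filter_not Finset.univ (fun j => j ∈ J) w, hufJ]
  have hJw : k ≤ ∑ j ∈ J, w j := by
    calc k = ∑ _j ∈ J, 1 := by rw [Finset.sum_const, smul_eq_mul, mul_one, hJcard]
    _ ≤ ∑ j ∈ J, w j := Finset.sum_le_sum (fun j _ => hw j)
  have h2T : 2 * ∑ x ∈ F, S x =
      2 * (F.card * ∑ j ∈ J, w j) + F.card * ∑ j ∈ Finset.univ.filter (fun j => j ∉ J), w j := by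
    rw [hT]
    rw [← Finset.sum_filter_add_sum_filter_not Finset.univ (fun j => j ∈ J) (fun j => c j * w j),
      hufJ]
    have hA : ∑ j ∈ J, c j * w j = F.card * ∑ j ∈ J, w j := by
      rw [Finset.mul_sum]
      apply Finset.sum_congr rfl
      intro j hj
      have hcj : c j = F.card := hfull j hj
      rw [hcj]
    have hB : 2 * ∑ j ∈ Finset.univ.filter (fun j => j ∉ J), c j * w j =
        F.card * ∑ j ∈ Finset.univ.filter (fun j => j ∉ J), w j := by
      rw [Finset.mul_sum, Finset.mul_sum]
      apply Finset.sum_congr rfl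
      intro j hj
      have hjJ : j ∉ J := (Finset.mem_filter.mp hj).2
      have h2cj : 2 * c j = F.card := hhalf j hjJ
      rw [← h2cj]
      ring
    rw [mul_add, hA, hB]
  have hbound : F.card * ((∑ j, w j) + k) ≤ 2 * ∑ x ∈ F, S x := by
    rw [h2T]
    have h2 : F.card * k ≤ F.card * ∑ j ∈ J, w j := Nat.mul_le_mul_left _ hJw
    calc F.card * ((∑ j, w j) + k)
        = F.card * ∑ j ∈ J, w j + F.card * ∑ j ∈ Finset.univ.filter (fun j => j ∉ J), w j
          + F.card * k := by rw [hW]; ring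
      _ ≤ F.card * ∑ j ∈ J, w j + F.card * ∑ j ∈ Finset.univ.filter (fun j => j ∉ J), w j
          + F.card * ∑ j ∈ J, w j := by omega
      _ = 2 * (F.card * ∑ j ∈ J, w j)
          + F.card * ∑ j ∈ Finset.univ.filter (fun j => j ∉ J), w j := by ring
  obtain ⟨z, hzF, hz⟩ := Finset.exists_le_of_sum_le (f := fun _ => (∑ j, w j) + k)
    (g := fun x => 2 * S x) hFne (by
      rw [Finset.sum_const, smul_eq_mul, ← Finset.mul_sum]
      exact hbound)
  refine ⟨z, ?_⟩
  have hfilters : Finset.univ.filter (fun j => ML2.dot (vec j) z = b j) =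
      Finset.univ.filter (fun j => ∑ i ∈ α j, z i = b j) :=
    Finset.filter_congr (fun j _ => by rw [hdotvec j z])
  rw [← hfilters]
  exact hz
end
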